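/- Let P0, P1 be symmetric positive definite, Q = I - P0^{-1/2} (P0^{1/2} P1 P0^{1/2})^{1/2} P0^{-1/2}, P_t = (I - tQ) P0 (I - tQ), and A_t = Q(tQ - I)^{-1} for t in [0,1]. Then dP_t/dt = A_t P_t + P_t A_t'. -/

import Mathlib

/-!
With `B t = t • Q - 1` one has `P t = B t * P0 * (B t)ᵀ` and, `Q` being symmetric,
`A t = B' * (B t)⁻¹` where `B' = Q` is the derivative of `B`. Hence
`A t * P t + P t * (A t)ᵀ = B' * P0 * (B t)ᵀ + B t * P0 * B'ᵀ`, which is the product rule for `P`.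
The inverse is genuine because `1 - t • Q = (1 - t) • 1 + t • S` with
`S = P0^{-1/2} (P0^{1/2} P1 P0^{1/2})^{1/2} P0^{-1/2}` positive definite.
-/

open Matrix

/-- The symmetric positive definite square root of a positive definite matrix. -/
noncomputable def sqrtm {n : ℕ} {P : Matrix (Fin n) (Fin n) ℝ} (hP : P.PosDef) :
    Matrix (Fin n) (Fin n) ℝ :=
  (hP.posSemidef.1.eigenvectorUnitary : Matrix (Fin n) (Fin n) ℝ) *
    diagonal ((↑) ∘ (fun x : ℝ => Real.sqrt x) ∘ hP.posSemidef.1.eigenvalues) *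
    (star hP.posSemidef.1.eigenvectorUnitary : Matrix (Fin n) (Fin n) ℝ)

/-- Squared Frobenius norm of a real matrix. -/
noncomputable def frobSq {n : ℕ} (M : Matrix (Fin n) (Fin n) ℝ) : ℝ := (M * Mᵀ).trace

lemma sqrtm_eq_cfc {n : ℕ} {P : Matrix (Fin n) (Fin n) ℝ} (hP : P.PosDef) :
    sqrtm hP = cfc Real.sqrt P := by
  rw [hP.posSemidef.1.cfc_eq, IsHermitian.cfc, sqrtm]
  rfl

open scoped MatrixOrder in
lemma posDef_sqrtm {n : ℕ} {P : Matrix (Fin n) (Fin n) ℝ} (hP : P.PosDef) :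
    (sqrtm hP).PosDef := by
  rw [sqrtm_eq_cfc, ← isStrictlyPositive_iff_posDef, cfc_isStrictlyPositive_iff Real.sqrt P]
  intro x hx
  exact Real.sqrt_pos.mpr
    ((StarOrderedRing.isStrictlyPositive_iff_spectrum_pos P).mp hP.isStrictlyPositive x hx)

namespace Matrix

section PosDef

open scoped ComplexOrder

variable {n 𝕜 : Type*} [DecidableEq n] [RCLike 𝕜]

lemma PosDef.inv_mul_mul_inv [Fintype n] {M R : Matrix n n 𝕜} (hM : M.PosDef) (hR : R.PosDef) :
    (M⁻¹ * R * M⁻¹).PosDef := by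
  have hMinv : M⁻¹ᴴ = M⁻¹ := hM.isHermitian.inv
  simpa only [hMinv] using hR.conjTranspose_mul_mul_same (B := M⁻¹)
    (mulVec_injective_iff_isUnit.mpr hM.inv.isUnit)

lemma PosDef.one_sub_smul_one_sub {S : Matrix n n 𝕜} (hS : S.PosDef) {t : ℝ}
    (ht : t ∈ Set.Icc (0 : ℝ) 1) : (1 - t • (1 - S)).PosDef := by
  have hcomb : 1 - t • (1 - S) = (1 - t) • (1 : Matrix n n 𝕜) + t • S := by module
  rcases ht.1.eq_or_lt with rfl | ht0
  · simpa using PosDef.one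
  · rw [hcomb]
    exact PosDef.posSemidef_add (PosSemidef.one.smul (sub_nonneg.mpr ht.2)) (hS.smul ht0)

end PosDef

section Lyapunov

variable {n R : Type*} [Fintype n] [DecidableEq n] [CommRing R]

lemma mul_inv_mul_add_mul_transpose_mul_inv {B : Matrix n n R} (hB : IsUnit B.det)
    (C X : Matrix n n R) :
    C * B⁻¹ * (B * X * Bᵀ) + B * X * Bᵀ * (C * B⁻¹)ᵀ = C * X * Bᵀ + B * X * Cᵀ := by
  have hBT : Bᵀ * B⁻¹ᵀ = 1 := by
    rw [← transpose_mul, nonsing_inv_mul B hB, transpose_one]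
  rw [transpose_mul]
  simp only [Matrix.mul_assoc]
  rw [← Matrix.mul_assoc B⁻¹ B, nonsing_inv_mul B hB, Matrix.one_mul, ← Matrix.mul_assoc Bᵀ, hBT,
    Matrix.one_mul]

end Lyapunov

section Derivative

variable {𝕜 : Type*} [NontriviallyNormedField 𝕜]

lemma hasDerivAt_mul_apply {l m p : Type*} [Fintype m] {M : 𝕜 → Matrix l m 𝕜}
    {N : 𝕜 → Matrix m p 𝕜} {M' : Matrix l m 𝕜} {N' : Matrix m p 𝕜} {t : 𝕜}
    (hM : ∀ i j, HasDerivAt (fun s => M s i j) (M' i j) t)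
    (hN : ∀ i j, HasDerivAt (fun s => N s i j) (N' i j) t) (i : l) (k : p) :
    HasDerivAt (fun s => (M s * N s) i k) ((M' * N t + M t * N') i k) t := by
  simp only [mul_apply, add_apply, ← Finset.sum_add_distrib]
  exact HasDerivAt.fun_sum fun j _ => (hM i j).mul (hN j k)

variable {n : Type*} [DecidableEq n]

lemma hasDerivAt_smul_sub_one_apply (Q : Matrix n n 𝕜) (t : 𝕜) (i j : n) :
    HasDerivAt (fun s => (s • Q - 1) i j) (Q i j) t := by
  simpa using ((hasDerivAt_id t).mul_const (Q i j)).sub_const ((1 : Matrix n n 𝕜) i j)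

lemma hasDerivAt_smul_sub_one_mul_mul_smul_sub_one_apply [Fintype n] (Q X : Matrix n n 𝕜)
    (t : 𝕜) (i j : n) :
    HasDerivAt (fun s => ((s • Q - 1) * X * (s • Q - 1)) i j)
      ((Q * X * (t • Q - 1) + (t • Q - 1) * X * Q) i j) t := by
  have hX : ∀ i j, HasDerivAt (fun _ : 𝕜 => X i j) ((0 : Matrix n n 𝕜) i j) t :=
    fun i j => hasDerivAt_const t (X i j)
  have hXQ := hasDerivAt_mul_apply (hasDerivAt_smul_sub_one_apply Q t) hX
  convert hasDerivAt_mul_apply hXQ (hasDerivAt_smul_sub_one_apply Q t) i j using 2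
  simp only [Matrix.mul_zero, add_zero]

end Derivative

end Matrix

theorem stmt_4_general {n : ℕ} {P0 P1 : Matrix (Fin n) (Fin n) ℝ}
    (hP0 : P0.PosDef)
    (hS : (sqrtm hP0 * P1 * sqrtm hP0).PosDef)
    (Q : Matrix (Fin n) (Fin n) ℝ)
    (hQ : Q = 1 - (sqrtm hP0)⁻¹ * sqrtm hS * (sqrtm hP0)⁻¹)
    (P A : ℝ → Matrix (Fin n) (Fin n) ℝ)
    (hP : ∀ t : ℝ, P t = (1 - t • Q) * P0 * (1 - t • Q))
    (hA : ∀ t : ℝ, A t = Q * (t • Q - 1)⁻¹) :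
    ∀ t ∈ Set.Icc (0 : ℝ) 1, ∀ i j : Fin n,
      HasDerivAt (fun s : ℝ => P s i j) ((A t * P t + P t * (A t)ᵀ) i j) t := by
  intro t ht i j
  have hSpd := (posDef_sqrtm hP0).inv_mul_mul_inv (posDef_sqrtm hS)
  have hQT : Qᵀ = Q := by
    rw [hQ, transpose_sub, transpose_one, (isHermitian_iff_isSymm.mp hSpd.isHermitian).eq]
  have hB : IsUnit (t • Q - 1).det := by
    have hpd : (1 - t • Q).PosDef := hQ ▸ hSpd.one_sub_smul_one_sub ht
    rw [← isUnit_iff_isUnit_det, ← neg_sub]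
    exact hpd.isUnit.neg
  have hBT : (t • Q - 1)ᵀ = t • Q - 1 := by
    rw [transpose_sub, transpose_smul, transpose_one, hQT]
  have hPs : ∀ s : ℝ, P s = (s • Q - 1) * P0 * (s • Q - 1) := fun s => by
    rw [hP, ← neg_sub (s • Q) 1, Matrix.neg_mul, neg_mul_neg]
  have hsandwich := mul_inv_mul_add_mul_transpose_mul_inv hB Q P0
  rw [hBT, hQT] at hsandwich
  simp only [hPs, hA]
  rw [hsandwich]
  exact hasDerivAt_smul_sub_one_mul_mul_smul_sub_one_apply Q P0 t i j

theorem stmt_4 {n : ℕ} {P0 P1 : Matrix (Fin n) (Fin n) ℝ}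
    (hP0 : P0.PosDef) (hP1 : P1.PosDef)
    (hS : (sqrtm hP0 * P1 * sqrtm hP0).PosDef)
    (Q : Matrix (Fin n) (Fin n) ℝ)
    (hQ : Q = 1 - (sqrtm hP0)⁻¹ * sqrtm hS * (sqrtm hP0)⁻¹)
    (P A : ℝ → Matrix (Fin n) (Fin n) ℝ)
    (hP : ∀ t : ℝ, P t = (1 - t • Q) * P0 * (1 - t • Q))
    (hA : ∀ t : ℝ, A t = Q * (t • Q - 1)⁻¹) :
    ∀ t ∈ Set.Icc (0 : ℝ) 1, ∀ i j : Fin n,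
      HasDerivAt (fun s : ℝ => P s i j) ((A t * P t + P t * (A t)ᵀ) i j) t :=
  stmt_4_general hP0 hS Q hQ P A hP hA
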